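/- arXiv:2003.02243 — 6 statements merged into one kernel-verified Lean document; each statement's English description precedes it below -/
import Mathlib

section
/- Let c > 0. Let λ be a Borel measure on ℝ^{n+2} that is invariant under g_t for every t ∈ ℝ, is finite on compact sets, and satisfies λ(F_{1,c}) < ∞. Let Λ ⊆ 𝓛 be a countable set whose intersection with every compact subset of ℝ^{n+2} is finite. If for every c' ∈ (0, c] one has #(F_{T,c'} ∩ Λ)/T → λ(F_{1,c'}) as T → ∞, then #(E_{T,c} ∩ Λ)/T → λ(F_{1,c}) as T → ∞. -/
noncomputable section

open MeasureTheory Metric Filter Topology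
open scoped ENNReal

/-- The index of the coordinate `x_{n+2}` (0-indexed: `n+1`). -/
def lastC (n : ℕ) : Fin (n + 2) := Fin.last (n + 1)

/-- The index of the coordinate `x_{n+1}` (0-indexed: `n`). -/
def sndC (n : ℕ) : Fin (n + 2) := ⟨n, by omega⟩

/-- The quadratic form `Q(x) = x_1² + ⋯ + x_{n+1}² − x_{n+2}²`. -/
def Qf (n : ℕ) (x : EuclideanSpace ℝ (Fin (n + 2))) : ℝ :=
  (∑ i : Fin (n + 1), x (Fin.castSucc i) ^ 2) - x (lastC n) ^ 2

/-- The positive light cone. -/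
def lightCone (n : ℕ) : Set (EuclideanSpace ℝ (Fin (n + 2))) :=
  {x | Qf n x = 0 ∧ 0 ≤ x (lastC n)}

/-- `Λ₀`: the intersection of the light cone with `ℤ^{n+1} × ℤ_{>0}`. -/
def Lat0 (n : ℕ) : Set (EuclideanSpace ℝ (Fin (n + 2))) :=
  {x | x ∈ lightCone n ∧ (∀ i, ∃ m : ℤ, x i = (m : ℝ)) ∧ 0 < x (lastC n)}

/-- The set `F_{T,c}`. -/
def Fset (n : ℕ) (T c : ℝ) : Set (EuclideanSpace ℝ (Fin (n + 2))) :=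
  {x | x ∈ lightCone n ∧ x (lastC n) ^ 2 - x (sndC n) ^ 2 < c ^ 2 ∧
    1 ≤ x (sndC n) + x (lastC n) ∧ x (sndC n) + x (lastC n) < Real.exp T}

/-- The set `E_{T,c}`. -/
def Eset (n : ℕ) (T c : ℝ) : Set (EuclideanSpace ℝ (Fin (n + 2))) :=
  {x | x ∈ lightCone n ∧ 2 * x (lastC n) * (x (lastC n) - x (sndC n)) < c ^ 2 ∧
    1 ≤ x (lastC n) ∧ x (lastC n) < Real.cosh T}

/-- The first `n+1` coordinates of a point of `ℝ^{n+2}`. -/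
def firstPart (n : ℕ) (x : EuclideanSpace ℝ (Fin (n + 2))) : EuclideanSpace ℝ (Fin (n + 1)) :=
  WithLp.toLp 2 (fun i => x (Fin.castSucc i))

/-- The one-parameter diagonal flow `g_t`. -/
def gmap (n : ℕ) (t : ℝ) (x : EuclideanSpace ℝ (Fin (n + 2))) :
    EuclideanSpace ℝ (Fin (n + 2)) :=
  WithLp.toLp 2 fun i =>
    if i = sndC n then Real.cosh t * x (sndC n) - Real.sinh t * x (lastC n)
    else if i = lastC n then - Real.sinh t * x (sndC n) + Real.cosh t * x (lastC n)
    else x i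

/-! In the light-cone coordinates `s = x_{n+1} + x_{n+2}` and `u = x_{n+2} - x_{n+1}`, both
nonnegative on `𝓛`, the set `F_{T,c}` is `{s u < c², 1 ≤ s < e^T}` and `E_{T,c}` is
`{(s + u) u < c², 2 ≤ s + u < 2 cosh T}`. Far out on the cone `u` is small, so up to the finitely
many points of `Λ` in a slab `x_{n+2} ≤ M` one has `E_{T,c} ⊆ F_{T + log 2, c}` and, for `c' < c`
and `T` large, `F_{T - log 2, c'} ⊆ E_{T,c}`. Shifting `T` by a constant does not change the limit
of a count divided by `T`, and `λ(F_{1,c'}) → λ(F_{1,c})` as `c' ↑ c` by continuity from below. -/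

lemma Filter.Tendsto.comp_add_const_add_div {g : ℝ → ℝ} {L : ℝ}
    (h : Tendsto (fun T => g T / T) atTop (𝓝 L)) (d C : ℝ) :
    Tendsto (fun T => (g (T + d) + C) / T) atTop (𝓝 L) := by
  have hinv : Tendsto (fun T : ℝ => T⁻¹) atTop (𝓝 0) := tendsto_inv_atTop_zero
  have hshift := (h.comp (tendsto_atTop_add_const_right _ d tendsto_id)).mul
    ((tendsto_const_nhds (x := (1 : ℝ))).add (hinv.const_mul d))
  have hlim := hshift.add (hinv.const_mul C)
  rw [mul_zero, add_zero, mul_zero, add_zero, mul_one] at hlim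
  refine hlim.congr' ?_
  filter_upwards [eventually_gt_atTop (max 0 (-d))] with T hT
  have hT0 : T ≠ 0 := (lt_of_le_of_lt (le_max_left _ _) hT).ne'
  have hTd : T + d ≠ 0 := by linarith [le_max_right 0 (-d)]
  simp only [Function.comp_apply, id_eq]
  field_simp

lemma Set.ncard_inter_le_ncard_inter_add {α : Type*} {A B S Λ : Set α} (h : A ⊆ B ∪ S)
    (hB : (B ∩ Λ).Finite) (hS : (S ∩ Λ).Finite) :
    (A ∩ Λ).ncard ≤ (B ∩ Λ).ncard + (S ∩ Λ).ncard := by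
  refine (Set.ncard_le_ncard ?_ (hB.union hS)).trans (Set.ncard_union_le _ _)
  rw [← Set.union_inter_distrib_right]
  exact Set.inter_subset_inter_left Λ h

section LightCone

variable {n : ℕ} {x : EuclideanSpace ℝ (Fin (n + 2))}

lemma abs_sndC_le_lastC (hx : x ∈ lightCone n) : |x (sndC n)| ≤ x (lastC n) := by
  obtain ⟨hQ, hlast⟩ := hx
  have hsnd : x (sndC n) ^ 2 ≤ ∑ i : Fin (n + 1), x (Fin.castSucc i) ^ 2 :=
    Finset.single_le_sum (f := fun i : Fin (n + 1) => x (Fin.castSucc i) ^ 2)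
      (fun i _ => sq_nonneg _) (Finset.mem_univ (Fin.last n))
  rw [Qf] at hQ
  exact abs_le_of_sq_le_sq' (by linarith) hlast |> abs_le.2

lemma norm_sq_eq_of_mem_lightCone (hx : x ∈ lightCone n) :
    ‖x‖ ^ 2 = 2 * x (lastC n) ^ 2 := by
  have hQ := hx.1
  rw [Qf] at hQ
  rw [EuclideanSpace.norm_sq_eq, Fin.sum_univ_castSucc]
  simp only [Real.norm_eq_abs, sq_abs]
  change _ + x (lastC n) ^ 2 = _
  linarith

lemma finite_inter_of_subset_lastC_le {Λ A : Set (EuclideanSpace ℝ (Fin (n + 2)))}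
    (hΛL : Λ ⊆ lightCone n)
    (hdisc : ∀ K : Set (EuclideanSpace ℝ (Fin (n + 2))), IsCompact K → (Λ ∩ K).Finite)
    {M : ℝ} (hA : A ⊆ {x | x (lastC n) ≤ M}) : (A ∩ Λ).Finite := by
  refine (hdisc (closedBall 0 (2 * M)) (isCompact_closedBall _ _)).subset ?_
  rintro x ⟨hxA, hxΛ⟩
  have hxL := hΛL hxΛ
  have hxM : x (lastC n) ≤ M := hA hxA
  have hnorm := norm_sq_eq_of_mem_lightCone hxL
  refine ⟨hxΛ, mem_closedBall_zero_iff.2 ?_⟩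
  nlinarith [norm_nonneg x, hxL.2]

lemma lastC_sub_sndC_lt_of_mem_Fset {T c : ℝ} (hx : x ∈ Fset n T c) :
    x (lastC n) - x (sndC n) < c ^ 2 := by
  obtain ⟨hxL, hq, hs, -⟩ := hx
  have hab := abs_le.1 (abs_sndC_le_lastC hxL)
  nlinarith [mul_nonneg (by linarith : 0 ≤ x (lastC n) - x (sndC n))
    (by linarith : 0 ≤ x (sndC n) + x (lastC n) - 1)]

lemma Fset_subset_lastC_le (T c : ℝ) :
    Fset n T c ⊆ {x | x (lastC n) ≤ (Real.exp T + c ^ 2) / 2} := fun x hx => by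
  have hu := lastC_sub_sndC_lt_of_mem_Fset hx
  have hs := hx.2.2.2
  change x (lastC n) ≤ _
  linarith

lemma Eset_subset_lastC_le (T c : ℝ) :
    Eset n T c ⊆ {x | x (lastC n) ≤ Real.cosh T} := fun _ hx => hx.2.2.2.le

lemma Fset_mono {T c₁ c₂ : ℝ} (h₀ : 0 ≤ c₁) (h : c₁ ≤ c₂) : Fset n T c₁ ⊆ Fset n T c₂ :=
  fun _ ⟨hxL, hq, hs⟩ => ⟨hxL, hq.trans_le (pow_le_pow_left₀ h₀ h 2), hs⟩

lemma Eset_subset_Fset_add_log_two_union {T : ℝ} (hT : 0 ≤ T) (c : ℝ) :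
    Eset n T c ⊆ Fset n (T + Real.log 2) c ∪ {x | x (lastC n) ≤ 1 + c ^ 2} := by
  rintro x ⟨hxL, hq, hb, hbT⟩
  have hab := abs_le.1 (abs_sndC_le_lastC hxL)
  set a := x (sndC n)
  set b := x (lastC n)
  by_cases hs : 1 ≤ a + b
  · have hcosh : Real.cosh T ≤ Real.exp T := by
      rw [Real.cosh_eq]
      linarith [Real.exp_le_exp.2 (by linarith : -T ≤ T)]
    have hexp : Real.exp (T + Real.log 2) = 2 * Real.exp T := by
      rw [Real.exp_add, Real.exp_log two_pos, mul_comm]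
    refine Or.inl ⟨hxL, ?_, hs, by linarith⟩
    nlinarith [mul_nonneg (by linarith : 0 ≤ b - a) (by linarith : 0 ≤ b - a)]
  · exact Or.inr (show b ≤ 1 + c ^ 2 by nlinarith)

lemma exists_eventually_Fset_sub_log_two_subset_Eset_union {c c' : ℝ} (h : c' ^ 2 < c ^ 2) :
    ∃ M, ∀ᶠ T in atTop,
      Fset n (T - Real.log 2) c' ⊆ Eset n T c ∪ {x | x (lastC n) ≤ M} := by
  set K := max 1 (c' ^ 4 / (c ^ 2 - c' ^ 2))
  have hK₁ : 1 ≤ K := le_max_left _ _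
  -- `s u < c'²` with `s ≥ K` forces `u² < c² - c'²`, hence `(s + u) u < c²`
  have hK : c' ^ 4 ≤ K * (c ^ 2 - c' ^ 2) :=
    (div_le_iff₀ (by linarith)).1 (le_max_right _ _)
  refine ⟨K + c' ^ 2, ?_⟩
  filter_upwards [Real.tendsto_exp_atTop.eventually_ge_atTop (2 * c' ^ 2)] with T hT
  intro x hx
  have hu := lastC_sub_sndC_lt_of_mem_Fset hx
  obtain ⟨hxL, hq, hs, hsT⟩ := hx
  have hab := abs_le.1 (abs_sndC_le_lastC hxL)
  set a := x (sndC n)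
  set b := x (lastC n)
  by_cases hb : b ≤ K + c' ^ 2
  · exact Or.inr hb
  have huK : (b - a) * K < c' ^ 2 := by
    nlinarith [mul_le_mul_of_nonneg_left (by linarith : K ≤ a + b) (by linarith : 0 ≤ b - a)]
  have hu2 : (b - a) ^ 2 < c ^ 2 - c' ^ 2 := by
    have : ((b - a) * K) ^ 2 < (c' ^ 2) ^ 2 :=
      pow_lt_pow_left₀ huK (by nlinarith) two_ne_zero
    nlinarith [mul_le_mul_of_nonneg_left hK₁ (sq_nonneg (b - a))]
  have hexp : Real.exp (T - Real.log 2) = Real.exp T / 2 := by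
    rw [Real.exp_sub, Real.exp_log two_pos]
  refine Or.inl ⟨hxL, by nlinarith, by linarith, ?_⟩
  rw [Real.cosh_eq]
  linarith [Real.exp_pos (-T)]

lemma monotone_Fset_sub_div {T c : ℝ} (hc : 0 < c) :
    Monotone fun k : ℕ => Fset n T (c - c / (k + 2)) := fun k l hkl =>
  Fset_mono (sub_nonneg.2 (div_le_self hc.le (by linarith [k.cast_nonneg (α := ℝ)])))
    (sub_le_sub_left (div_le_div_of_nonneg_left hc.le (by positivity) (by gcongr)) c)

lemma Fset_eq_iUnion {T c : ℝ} (hc : 0 < c) :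
    Fset n T c = ⋃ k : ℕ, Fset n T (c - c / (k + 2)) := by
  refine subset_antisymm (fun x ⟨hxL, hq, hs⟩ => ?_) (Set.iUnion_subset fun k =>
    Fset_mono (sub_nonneg.2 (div_le_self hc.le (by linarith [k.cast_nonneg (α := ℝ)])))
      (sub_le_self c (by positivity)))
  have hlim : Tendsto (fun k : ℕ => (c - c / (k + 2)) ^ 2) atTop (𝓝 (c ^ 2)) := by
    have : Tendsto (fun k : ℕ => c / ((k : ℝ) + 2)) atTop (𝓝 0) :=
      tendsto_const_nhds.div_atTop (tendsto_atTop_add_const_right _ 2 tendsto_natCast_atTop_atTop)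
    simpa using (tendsto_const_nhds.sub this).pow 2
  obtain ⟨k, hk⟩ := (hlim.eventually (eventually_gt_nhds hq)).exists
  exact Set.mem_iUnion.2 ⟨k, hxL, hk, hs⟩

lemma exists_lt_toReal_measure_Fset {μ : Measure (EuclideanSpace ℝ (Fin (n + 2)))} {T c : ℝ}
    (hc : 0 < c) (hfin : μ (Fset n T c) ≠ ∞) {a : ℝ} (ha : a < (μ (Fset n T c)).toReal) :
    ∃ c' ∈ Set.Ioo 0 c, a < (μ (Fset n T c')).toReal := by
  have hlim := tendsto_measure_iUnion_atTop (μ := μ) (monotone_Fset_sub_div (T := T) hc)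
  rw [← Fset_eq_iUnion hc] at hlim
  obtain ⟨k, hk⟩ :=
    (((ENNReal.tendsto_toReal hfin).comp hlim).eventually (eventually_gt_nhds ha)).exists
  exact ⟨_, ⟨sub_pos.2 (div_lt_self hc (by linarith [k.cast_nonneg (α := ℝ)])),
    sub_lt_self c (by positivity)⟩, hk⟩

lemma ncard_inter_le_add_ncard_slab {Λ A B : Set (EuclideanSpace ℝ (Fin (n + 2)))}
    (hΛL : Λ ⊆ lightCone n)
    (hdisc : ∀ K : Set (EuclideanSpace ℝ (Fin (n + 2))), IsCompact K → (Λ ∩ K).Finite)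
    {M M' : ℝ} (hB : B ⊆ {x | x (lastC n) ≤ M'}) (h : A ⊆ B ∪ {x | x (lastC n) ≤ M}) :
    ((A ∩ Λ).ncard : ℝ) ≤ (B ∩ Λ).ncard + ({x | x (lastC n) ≤ M} ∩ Λ).ncard :=
  (Nat.cast_le.2 (Set.ncard_inter_le_ncard_inter_add h
    (finite_inter_of_subset_lastC_le hΛL hdisc hB)
    (finite_inter_of_subset_lastC_le hΛL hdisc subset_rfl))).trans_eq (Nat.cast_add _ _)

end LightCone

theorem Eset_asymptotics_of_Fset_asymptotics_general (n : ℕ) (c : ℝ) (hc : 0 < c)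
    (lam : Measure (EuclideanSpace ℝ (Fin (n + 2))))
    (hfin : lam (Fset n 1 c) < ⊤)
    (Λ : Set (EuclideanSpace ℝ (Fin (n + 2))))
    (hΛL : Λ ⊆ lightCone n)
    (hdisc : ∀ K : Set (EuclideanSpace ℝ (Fin (n + 2))), IsCompact K → (Λ ∩ K).Finite)
    (hF : ∀ c' : ℝ, 0 < c' → c' ≤ c →
      Tendsto (fun T : ℝ => ((Fset n T c' ∩ Λ).ncard : ℝ) / T) atTop
        (𝓝 (lam (Fset n 1 c')).toReal)) :
    Tendsto (fun T : ℝ => ((Eset n T c ∩ Λ).ncard : ℝ) / T) atTop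
      (𝓝 (lam (Fset n 1 c)).toReal) := by
  refine tendsto_order.2 ⟨fun a ha => ?_, fun b hb => ?_⟩
  · obtain ⟨c', ⟨hc'₀, hc'c⟩, ha'⟩ := exists_lt_toReal_measure_Fset hc hfin.ne ha
    obtain ⟨M, hM⟩ := exists_eventually_Fset_sub_log_two_subset_Eset_union (n := n) (c := c)
      (pow_lt_pow_left₀ hc'c hc'₀.le two_ne_zero)
    have hlim := (hF c' hc'₀ hc'c.le).comp_add_const_add_div (-Real.log 2)
      (-(({x | x (lastC n) ≤ M} ∩ Λ).ncard : ℝ))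
    filter_upwards [hlim.eventually (eventually_gt_nhds ha'), hM, eventually_gt_atTop 0]
      with T haT hT hT₀
    refine haT.trans_le (div_le_div_of_nonneg_right ?_ hT₀.le)
    rw [← sub_eq_add_neg, ← sub_eq_add_neg, sub_le_iff_le_add]
    exact ncard_inter_le_add_ncard_slab hΛL hdisc (Eset_subset_lastC_le T c) hT
  · have hlim := (hF c hc le_rfl).comp_add_const_add_div (Real.log 2)
      (({x | x (lastC n) ≤ 1 + c ^ 2} ∩ Λ).ncard : ℝ)
    filter_upwards [hlim.eventually (eventually_lt_nhds hb), eventually_gt_atTop 0]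
      with T hbT hT₀
    refine lt_of_le_of_lt (div_le_div_of_nonneg_right ?_ hT₀.le) hbT
    exact ncard_inter_le_add_ncard_slab hΛL hdisc (Fset_subset_lastC_le _ c)
      (Eset_subset_Fset_add_log_two_union hT₀.le c)

/-- **Corollary 2.7**: if the lattice point count in `F_{T,c'}` has the expected
asymptotics for every `c' ≤ c`, then so does the count in `E_{T,c}`. -/
theorem Eset_asymptotics_of_Fset_asymptotics (n : ℕ) (hn : 1 ≤ n) (c : ℝ) (hc : 0 < c)
    (lam : Measure (EuclideanSpace ℝ (Fin (n + 2))))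
    (hinv : ∀ t : ℝ, Measure.map (gmap n t) lam = lam)
    (hfc : IsFiniteMeasureOnCompacts lam)
    (hfin : lam (Fset n 1 c) < ⊤)
    (Λ : Set (EuclideanSpace ℝ (Fin (n + 2)))) (hΛc : Λ.Countable)
    (hΛL : Λ ⊆ lightCone n)
    (hdisc : ∀ K : Set (EuclideanSpace ℝ (Fin (n + 2))), IsCompact K → (Λ ∩ K).Finite)
    (hF : ∀ c' : ℝ, 0 < c' → c' ≤ c →
      Tendsto (fun T : ℝ => ((Fset n T c' ∩ Λ).ncard : ℝ) / T) atTop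
        (𝓝 (lam (Fset n 1 c')).toReal)) :
    Tendsto (fun T : ℝ => ((Eset n T c ∩ Λ).ncard : ℝ) / T) atTop
      (𝓝 (lam (Fset n 1 c)).toReal) :=
  Eset_asymptotics_of_Fset_asymptotics_general n c hc lam hfin Λ hΛL hdisc hF
end
end

section
/- Let α ∈ S^n, let c, T > 0, and let k ∈ SO(n+1) satisfy kα = u_{n+1}, the (n+1)-st standard basis vector of ℝ^{n+1}. Let v ∈ 𝓛 have last coordinate q > 0, and write v = (p, q) with p ∈ ℝ^{n+1} the first n+1 coordinates (so ‖p‖ = q). Then ‖α − p/q‖ < c/q and 1 ≤ q < cosh T hold if and only if k̂(p,q) ∈ E_{T,c}. -/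
/-! Since `‖α‖ = 1` and `‖p‖ = q`, expanding the square gives
`q² ‖α - p/q‖² = 2q (q - ⟪α, p⟫)`, and `⟪α, p⟫ = ⟪kα, kp⟫ = (kp)_{n+1}` is the `x_{n+1}`-coordinate
of `k̂(p, q)`. So the approximation condition is exactly the first inequality defining `E_{T,c}`,
while `k̂` fixes `q` and preserves the light cone. -/

noncomputable section

open MeasureTheory Metric Filter Topology
open scoped ENNReal

/-- The block-diagonal action of a linear isometry `k` of `ℝ^{n+1}` on `ℝ^{n+2}`:
`k` on the first `n+1` coordinates, identity on the last coordinate. -/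
def khat (n : ℕ)
    (k : EuclideanSpace ℝ (Fin (n + 1)) ≃ₗᵢ[ℝ] EuclideanSpace ℝ (Fin (n + 1)))
    (x : EuclideanSpace ℝ (Fin (n + 2))) : EuclideanSpace ℝ (Fin (n + 2)) :=
  WithLp.toLp 2 (fun i => Fin.lastCases (x (lastC n)) (fun j => k (firstPart n x) j) i)

theorem sq_mul_norm_sub_inv_smul_sq {E : Type*} [NormedAddCommGroup E] [InnerProductSpace ℝ E]
    {a p : E} {q : ℝ} (ha : ‖a‖ = 1) (hp : ‖p‖ = q) (hq : 0 < q) :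
    q ^ 2 * ‖a - q⁻¹ • p‖ ^ 2 = 2 * q * (q - inner ℝ a p) := by
  rw [norm_sub_sq_real, real_inner_smul_right, norm_smul, ha, hp,
    Real.norm_of_nonneg (inv_nonneg.2 hq.le)]
  field_simp
  ring

theorem norm_sub_inv_smul_lt_div_iff {E : Type*} [NormedAddCommGroup E] [InnerProductSpace ℝ E]
    {a p : E} {q c : ℝ} (ha : ‖a‖ = 1) (hp : ‖p‖ = q) (hq : 0 < q) (hc : 0 < c) :
    ‖a - q⁻¹ • p‖ < c / q ↔ 2 * q * (q - inner ℝ a p) < c ^ 2 := by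
  rw [← sq_mul_norm_sub_inv_smul_sq ha hp hq, lt_div_iff₀ hq, mul_comm, ← mul_pow,
    pow_lt_pow_iff_left₀ (by positivity) hc.le two_ne_zero]

theorem inner_eq_apply_of_map_eq_single {ι : Type*} [Fintype ι] [DecidableEq ι]
    (k : EuclideanSpace ℝ ι ≃ₗᵢ[ℝ] EuclideanSpace ℝ ι) {α : EuclideanSpace ℝ ι} {i : ι}
    (hkα : k α = EuclideanSpace.single i 1) (p : EuclideanSpace ℝ ι) :
    inner ℝ α p = k p i := by
  rw [← k.inner_map_map, hkα, EuclideanSpace.inner_single_left, map_one, one_mul]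

theorem Qf_eq_norm_firstPart_sq (n : ℕ) (x : EuclideanSpace ℝ (Fin (n + 2))) :
    Qf n x = ‖firstPart n x‖ ^ 2 - x (lastC n) ^ 2 := by
  simp [Qf, firstPart, EuclideanSpace.real_norm_sq_eq]

theorem mem_lightCone_iff_norm_firstPart (n : ℕ) (x : EuclideanSpace ℝ (Fin (n + 2))) :
    x ∈ lightCone n ↔ ‖firstPart n x‖ = x (lastC n) := by
  rw [lightCone, Set.mem_ofPred_eq, Qf_eq_norm_firstPart_sq, sub_eq_zero]
  constructor
  · rintro ⟨hsq, hlast⟩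
    exact (pow_left_inj₀ (norm_nonneg _) hlast two_ne_zero).1 hsq
  · intro h
    exact ⟨by rw [h], h ▸ norm_nonneg _⟩

section khat

variable (n : ℕ) (k : EuclideanSpace ℝ (Fin (n + 1)) ≃ₗᵢ[ℝ] EuclideanSpace ℝ (Fin (n + 1)))
  (x : EuclideanSpace ℝ (Fin (n + 2)))

@[simp]
theorem khat_lastC : khat n k x (lastC n) = x (lastC n) :=
  Fin.lastCases_last (motive := fun _ => ℝ) ..

@[simp]
theorem firstPart_khat : firstPart n (khat n k x) = k (firstPart n x) := by
  ext i
  exact Fin.lastCases_castSucc (motive := fun _ => ℝ) ..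

theorem khat_sndC : khat n k x (sndC n) = k (firstPart n x) (Fin.last n) :=
  congrArg (· (Fin.last n)) (firstPart_khat n k x)

theorem khat_mem_lightCone_iff : khat n k x ∈ lightCone n ↔ x ∈ lightCone n := by
  simp only [mem_lightCone_iff_norm_firstPart, firstPart_khat, khat_lastC,
    LinearIsometryEquiv.norm_map]

end khat

theorem solution_iff_mem_Eset_general (n : ℕ)
    (α : EuclideanSpace ℝ (Fin (n + 1)))
    (hα : α ∈ sphere (0 : EuclideanSpace ℝ (Fin (n + 1))) 1)
    (c T : ℝ) (hc : 0 < c)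
    (k : EuclideanSpace ℝ (Fin (n + 1)) ≃ₗᵢ[ℝ] EuclideanSpace ℝ (Fin (n + 1)))
    (hkα : k α = EuclideanSpace.single (Fin.last n) (1 : ℝ))
    (v : EuclideanSpace ℝ (Fin (n + 2))) (hv : v ∈ lightCone n)
    (hq : 0 < v (lastC n)) :
    (‖α - (v (lastC n))⁻¹ • firstPart n v‖ < c / v (lastC n) ∧
        1 ≤ v (lastC n) ∧ v (lastC n) < Real.cosh T) ↔
      khat n k v ∈ Eset n T c := by
  have hαnorm : ‖α‖ = 1 := mem_sphere_zero_iff_norm.1 hα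
  have hpnorm : ‖firstPart n v‖ = v (lastC n) := (mem_lightCone_iff_norm_firstPart n v).1 hv
  have hcone : khat n k v ∈ lightCone n := (khat_mem_lightCone_iff n k v).2 hv
  rw [norm_sub_inv_smul_lt_div_iff hαnorm hpnorm hq hc,
    inner_eq_apply_of_map_eq_single k hkα]
  simp only [Eset, Set.mem_ofPred_eq, khat_lastC, khat_sndC, hcone, true_and]

/-- **Lemma 2.1**: `(p,q) ∈ 𝓛` is a solution of the Diophantine system iff `k̂(p,q)`
lies in `E_{T,c}`, for `k ∈ SO(n+1)` with `kα = u_{n+1}`. -/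
theorem solution_iff_mem_Eset (n : ℕ) (hn : 1 ≤ n)
    (α : EuclideanSpace ℝ (Fin (n + 1)))
    (hα : α ∈ sphere (0 : EuclideanSpace ℝ (Fin (n + 1))) 1)
    (c T : ℝ) (hc : 0 < c) (hT : 0 < T)
    (k : EuclideanSpace ℝ (Fin (n + 1)) ≃ₗᵢ[ℝ] EuclideanSpace ℝ (Fin (n + 1)))
    (hk : LinearMap.det (k.toLinearEquiv : EuclideanSpace ℝ (Fin (n + 1)) →ₗ[ℝ] EuclideanSpace ℝ (Fin (n + 1))) = 1)
    (hkα : k α = EuclideanSpace.single (Fin.last n) (1 : ℝ))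
    (v : EuclideanSpace ℝ (Fin (n + 2))) (hv : v ∈ lightCone n)
    (hq : 0 < v (lastC n)) :
    (‖α - (v (lastC n))⁻¹ • firstPart n v‖ < c / v (lastC n) ∧
        1 ≤ v (lastC n) ∧ v (lastC n) < Real.cosh T) ↔
      khat n k v ∈ Eset n T c :=
  solution_iff_mem_Eset_general n α hα c T hc k hkα v hv hq
end
end

section
/- For every c > 0 there exists r₀ > 0, depending only on c, such that for every subset A ⊆ S^{n−1}, every real T ≥ r₀, and every integer ℓ > c² + 1, setting c_ℓ = c·(1 − c²/(2ℓ))^{1/2}, C₀ = {x ∈ 𝓛 : x_{n+2} ≤ c² + 1} and C_ℓ = {x ∈ 𝓛 : x_{n+2} ≤ ℓ}, one has the inclusions F_{T−r₀, c_ℓ, A} ∖ C_ℓ ⊆ E_{T,c,A} ∖ C₀ ⊆ F_{T+r₀, c, A}. -/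
noncomputable section

open MeasureTheory Metric Filter Topology
open scoped ENNReal

/-- The first `n` coordinates of a point of `ℝ^{n+2}`. -/
def headN (n : ℕ) (x : EuclideanSpace ℝ (Fin (n + 2))) : EuclideanSpace ℝ (Fin n) :=
  WithLp.toLp 2 (fun i => x (Fin.castLE (by omega : n ≤ n + 2) i))

/-- The direction map `π(x) = (x_1,…,x_n)/‖(x_1,…,x_n)‖`. -/
def dir (n : ℕ) (x : EuclideanSpace ℝ (Fin (n + 2))) : EuclideanSpace ℝ (Fin n) :=
  ‖headN n x‖⁻¹ • headN n x

/-- The set `F_{T,c,A}`. -/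
def FsetA (n : ℕ) (T c : ℝ) (A : Set ↑(sphere (0 : EuclideanSpace ℝ (Fin n)) 1)) :
    Set (EuclideanSpace ℝ (Fin (n + 2))) :=
  {x | x ∈ Fset n T c ∧ headN n x ≠ 0 ∧ dir n x ∈ Subtype.val '' A}

/-- The set `E_{T,c,A}`. -/
def EsetA (n : ℕ) (T c : ℝ) (A : Set ↑(sphere (0 : EuclideanSpace ℝ (Fin n)) 1)) :
    Set (EuclideanSpace ℝ (Fin (n + 2))) :=
  {x | x ∈ Eset n T c ∧ headN n x ≠ 0 ∧ dir n x ∈ Subtype.val '' A}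

/-!
Write `a = x_{n+2}` and `b = x_{n+1}`; on the light cone `b ≤ a`. With `D = a - b` one has
`2aD = (a² - b²) + D²`, so the conditions defining `E` and `F` differ only by the term `D²`.
Once `a > ℓ` this term is at most `c⁴/(2ℓ)`, which is exactly what the shrinking `c ↦ c_ℓ`
absorbs. The height conditions match up to `r₀ = 1` because `a ≤ a + b ≤ 2a` and
`e^{T-1} ≤ e^T/2 < cosh T ≤ e^T ≤ e^{T+1}/2` for `T ≥ 0`.
-/

lemma sndC_le_lastC_of_mem_lightCone {n : ℕ} {x : EuclideanSpace ℝ (Fin (n + 2))}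
    (hx : x ∈ lightCone n) : x (sndC n) ≤ x (lastC n) := by
  have hQ : Qf n x = 0 := hx.1
  have hsq : x (sndC n) ^ 2 ≤ ∑ i : Fin (n + 1), x (Fin.castSucc i) ^ 2 :=
    Finset.single_le_sum (f := fun i : Fin (n + 1) => x (Fin.castSucc i) ^ 2)
      (fun i _ => sq_nonneg _) (Finset.mem_univ (Fin.last n))
  exact le_of_sq_le_sq (by unfold Qf at hQ; linarith) hx.2

lemma Real.exp_sub_one_lt_cosh (T : ℝ) : Real.exp (T - 1) < Real.cosh T := by
  have h : Real.exp (T - 1) * 2 < Real.exp T := by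
    rw [Real.exp_sub, div_mul_eq_mul_div, div_lt_iff₀ (Real.exp_pos 1)]
    exact mul_lt_mul_of_pos_left Real.exp_one_gt_two (Real.exp_pos T)
  rw [Real.cosh_eq]
  linarith [Real.exp_pos (-T)]

lemma Real.two_mul_cosh_le_exp_add_one {T : ℝ} (hT : 0 ≤ T) :
    2 * Real.cosh T ≤ Real.exp (T + 1) := by
  have hneg : Real.exp (-T) ≤ Real.exp T := Real.exp_le_exp.mpr (by linarith)
  have h : 2 * Real.exp T ≤ Real.exp (T + 1) := by
    rw [Real.exp_add, mul_comm]
    exact mul_le_mul_of_nonneg_left Real.exp_one_gt_two.le (Real.exp_pos T).le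
  rw [Real.cosh_eq]
  linarith

lemma sq_mul_sqrt_one_sub_div {c u : ℝ} (hu : 0 < u) (hcu : c ^ 2 ≤ 2 * u) :
    (c * Real.sqrt (1 - c ^ 2 / (2 * u))) ^ 2 = c ^ 2 - c ^ 4 / (2 * u) := by
  have hnonneg : 0 ≤ 1 - c ^ 2 / (2 * u) := by
    rw [sub_nonneg, div_le_one (by positivity)]
    exact hcu
  rw [mul_pow, Real.sq_sqrt hnonneg]
  ring

lemma two_mul_mul_sub_lt_of_sq_sub_sq_lt {a b c u : ℝ} (hu : 2 ≤ u) (hcu : c ^ 2 ≤ u)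
    (hba : b ≤ a) (hua : u < a) (hsum : 1 ≤ b + a)
    (h : a ^ 2 - b ^ 2 < c ^ 2 - c ^ 4 / (2 * u)) :
    2 * a * (a - b) < c ^ 2 := by
  set D := a - b with hD
  set S := a + b
  have hD0 : 0 ≤ D := sub_nonneg.mpr hba
  have hcorr : 0 ≤ c ^ 4 / (2 * u) := by positivity
  have hDS : D * S < c ^ 2 := by nlinarith
  have hDc : D < c ^ 2 := by nlinarith
  have huS : u < S := by linarith
  have hDu : D * u < c ^ 2 := lt_of_le_of_lt (mul_le_mul_of_nonneg_left huS.le hD0) hDS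
  have hD2 : D ^ 2 ≤ c ^ 4 / (2 * u) := by
    rw [le_div_iff₀ (by positivity)]
    have hsq : (D * u) ^ 2 ≤ (c ^ 2) ^ 2 := pow_le_pow_left₀ (by positivity) hDu.le 2
    nlinarith [mul_le_mul_of_nonneg_left (show 2 * u ≤ u * u by nlinarith) (sq_nonneg D)]
  calc 2 * a * D = (a ^ 2 - b ^ 2) + D ^ 2 := by rw [hD]; ring
    _ < c ^ 2 := by linarith

theorem FsetA_diff_subset_EsetA_diff {n : ℕ} {c u : ℝ} (hu : 2 ≤ u) (hcu : c ^ 2 + 1 < u)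
    (A : Set ↑(sphere (0 : EuclideanSpace ℝ (Fin n)) 1)) (T : ℝ) :
    FsetA n (T - 1) (c * Real.sqrt (1 - c ^ 2 / (2 * u))) A \
        {x ∈ lightCone n | x (lastC n) ≤ u} ⊆
      EsetA n T c A \ {x ∈ lightCone n | x (lastC n) ≤ c ^ 2 + 1} := by
  rintro x ⟨⟨⟨hcone, hsq, hsum, hexp⟩, hhead, hdir⟩, hxu⟩
  have hua : u < x (lastC n) := lt_of_not_ge fun h => hxu ⟨hcone, h⟩
  have hba := sndC_le_lastC_of_mem_lightCone hcone
  rw [sq_mul_sqrt_one_sub_div (by linarith) (by linarith)] at hsq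
  have hprod := two_mul_mul_sub_lt_of_sq_sub_sq_lt hu (by linarith) hba hua hsum hsq
  have hb : 0 < x (sndC n) := by nlinarith
  exact ⟨⟨⟨hcone, hprod, by linarith, by linarith [Real.exp_sub_one_lt_cosh T]⟩, hhead, hdir⟩,
    fun h => by linarith [h.2]⟩

theorem EsetA_diff_subset_FsetA {n : ℕ} {c T : ℝ} (hT : 0 ≤ T)
    (A : Set ↑(sphere (0 : EuclideanSpace ℝ (Fin n)) 1)) :
    EsetA n T c A \ {x ∈ lightCone n | x (lastC n) ≤ c ^ 2 + 1} ⊆ FsetA n (T + 1) c A := by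
  rintro x ⟨⟨⟨hcone, hprod, -, hcosh⟩, hhead, hdir⟩, hxc⟩
  have hca : c ^ 2 + 1 < x (lastC n) := lt_of_not_ge fun h => hxc ⟨hcone, h⟩
  have hba := sndC_le_lastC_of_mem_lightCone hcone
  have hD0 : 0 ≤ x (lastC n) - x (sndC n) := sub_nonneg.mpr hba
  refine ⟨⟨hcone, ?_, ?_, ?_⟩, hhead, hdir⟩
  · nlinarith [mul_le_mul_of_nonneg_left hba hD0]
  · nlinarith [sq_nonneg (2 * x (lastC n) - 1)]
  · linarith [Real.two_mul_cosh_le_exp_add_one hT]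

theorem Eset_sandwich_general (n : ℕ) (c : ℝ) :
    ∃ r₀ : ℝ, 0 < r₀ ∧
      ∀ A : Set ↑(sphere (0 : EuclideanSpace ℝ (Fin n)) 1),
        ∀ T : ℝ, r₀ ≤ T →
          ∀ ℓ : ℤ, (c ^ 2 + 1 : ℝ) < (ℓ : ℝ) →
            FsetA n (T - r₀) (c * Real.sqrt (1 - c ^ 2 / (2 * (ℓ : ℝ)))) A \
                {x ∈ lightCone n | x (lastC n) ≤ (ℓ : ℝ)} ⊆
              EsetA n T c A \ {x ∈ lightCone n | x (lastC n) ≤ c ^ 2 + 1} ∧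
            EsetA n T c A \ {x ∈ lightCone n | x (lastC n) ≤ c ^ 2 + 1} ⊆
              FsetA n (T + r₀) c A := by
  refine ⟨1, one_pos, fun A T hT ℓ hℓ => ⟨?_, EsetA_diff_subset_FsetA (by linarith) A⟩⟩
  have hℓ2 : (2 : ℝ) ≤ ℓ := by
    have : (1 : ℝ) < ℓ := by nlinarith [sq_nonneg c]
    exact_mod_cast (show (1 : ℤ) < ℓ by exact_mod_cast this)
  exact FsetA_diff_subset_EsetA_diff hℓ2 hℓ A T

/-- **Sandwiching `E_{T,c,A}` between sets `F_{T,c,A}`** (Section 3.1). -/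
theorem Eset_sandwich (n : ℕ) (hn : 1 ≤ n) (c : ℝ) (hc : 0 < c) :
    ∃ r₀ : ℝ, 0 < r₀ ∧
      ∀ A : Set ↑(sphere (0 : EuclideanSpace ℝ (Fin n)) 1),
        ∀ T : ℝ, r₀ ≤ T →
          ∀ ℓ : ℤ, (c ^ 2 + 1 : ℝ) < (ℓ : ℝ) →
            FsetA n (T - r₀) (c * Real.sqrt (1 - c ^ 2 / (2 * (ℓ : ℝ)))) A \
                {x ∈ lightCone n | x (lastC n) ≤ (ℓ : ℝ)} ⊆
              EsetA n T c A \ {x ∈ lightCone n | x (lastC n) ≤ c ^ 2 + 1} ∧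
            EsetA n T c A \ {x ∈ lightCone n | x (lastC n) ≤ c ^ 2 + 1} ⊆
              FsetA n (T + r₀) c A :=
  Eset_sandwich_general n c
end
end

section
/- Let X be a locally compact, second-countable metric space, let μ and (μ_i)_{i∈ℕ} be Borel probability measures on X such that μ_i → μ weakly. Let G : X → [0,∞) be Borel measurable, bounded on every compact subset of X, with μ-null set of discontinuity points, μ-integrable (∫ G dμ < ∞), and such that ∫ G dμ_i → ∫ G dμ. Then for every ε > 0 there exist i₀ ∈ ℕ and a continuous compactly supported φ : X → [0,1] such that ∫ (1 − φ)·G dμ_i < ε for all i ≥ i₀. -/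
noncomputable section

open MeasureTheory Metric Filter Topology
open scoped ENNReal

/-!
Approximate `G` from below by the Lipschitz functions `x ↦ inf_y (G y + n d(x, y))`, which
converge to `G` at its continuity points, hence `μ`-a.e., and cut them off by Urysohn functions
`φ_n` equal to `1` on an exhausting sequence of compact sets. By dominated convergence some
`ψ = φ_n · G_n` has `∫ ψ dμ > ∫ G dμ - ε`. As `ψ` is bounded and continuous,
`∫ G dμ_i - ∫ ψ dμ_i → ∫ G dμ - ∫ ψ dμ < ε`, and `ψ ≤ φ_n G` gives
`∫ (1 - φ_n) G dμ_i ≤ ∫ G dμ_i - ∫ ψ dμ_i`.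
-/

open Set NNReal

section LipschitzMinorant

variable {X : Type*} [MetricSpace X]

theorem lipschitzWith_ciInf {ι : Type*} {f : ι → X → ℝ} {K : ℝ≥0}
    (hf : ∀ i, LipschitzWith K (f i)) (hbdd : ∀ x, BddBelow (range fun i => f i x)) :
    LipschitzWith K fun x => ⨅ i, f i x := by
  cases isEmpty_or_nonempty ι
  · simpa only [Real.iInf_of_isEmpty] using LipschitzWith.const' (0 : ℝ)
  refine LipschitzWith.of_le_add_mul K fun x y => ?_
  rw [← sub_le_iff_le_add]
  refine le_ciInf fun i => sub_le_iff_le_add.2 ?_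
  exact (ciInf_le (hbdd x) i).trans ((hf i).le_add_mul x y)

/-- The Pasch–Hausdorff envelope of `G`: the largest `K`-Lipschitz function below `G`. -/
def lipschitzMinorant (G : X → ℝ) (K : ℝ≥0) (x : X) : ℝ :=
  ⨅ y, G y + K * dist x y

variable {G : X → ℝ}

theorem bddBelow_range_add_mul_dist (hG : ∀ x, 0 ≤ G x) (K : ℝ≥0) (x : X) :
    BddBelow (range fun y => G y + K * dist x y) :=
  ⟨0, by rintro _ ⟨y, rfl⟩; exact add_nonneg (hG y) (by positivity)⟩

theorem lipschitzMinorant_nonneg (hG : ∀ x, 0 ≤ G x) (K : ℝ≥0) (x : X) :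
    0 ≤ lipschitzMinorant G K x :=
  Real.iInf_nonneg fun y => add_nonneg (hG y) (by positivity)

theorem lipschitzMinorant_le (hG : ∀ x, 0 ≤ G x) (K : ℝ≥0) (x : X) :
    lipschitzMinorant G K x ≤ G x := by
  simpa [lipschitzMinorant] using ciInf_le (bddBelow_range_add_mul_dist hG K x) x

theorem lipschitzWith_lipschitzMinorant (hG : ∀ x, 0 ≤ G x) (K : ℝ≥0) :
    LipschitzWith K (lipschitzMinorant G K) := by
  refine lipschitzWith_ciInf (fun y => ?_) (bddBelow_range_add_mul_dist hG K)
  refine LipschitzWith.of_le_add_mul K fun x x' => ?_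
  have := dist_triangle x x' y
  have : (K : ℝ) * dist x y ≤ K * (dist x' y + dist x x') := by gcongr; linarith
  linarith

theorem le_lipschitzMinorant (hG : ∀ x, 0 ≤ G x) {K : ℝ≥0} {x : X} {r b : ℝ}
    (hball : ∀ y ∈ ball x r, b ≤ G y) (hKr : b ≤ K * r) :
    b ≤ lipschitzMinorant G K x := by
  have : Nonempty X := ⟨x⟩
  refine le_ciInf fun y => ?_
  by_cases hy : y ∈ ball x r
  · linarith [hball y hy, mul_nonneg K.coe_nonneg (dist_nonneg (x := x) (y := y))]
  · have : K * r ≤ K * dist x y := by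
      gcongr
      simpa [dist_comm] using hy
    linarith [hG y]

theorem tendsto_lipschitzMinorant (hG : ∀ x, 0 ≤ G x) {x : X} (hx : ContinuousAt G x) :
    Tendsto (fun K => lipschitzMinorant G K x) atTop (𝓝 (G x)) := by
  refine tendsto_order.2 ⟨fun a ha => ?_, fun a ha =>
    Eventually.of_forall fun K => (lipschitzMinorant_le hG K x).trans_lt ha⟩
  obtain ⟨b, hab, hbG⟩ := exists_between ha
  obtain ⟨r, hr, hball⟩ := Metric.mem_nhds_iff.1 (hx (Ioi_mem_nhds hbG))
  filter_upwards [eventually_ge_atTop (b / r).toNNReal] with K hK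
  refine hab.trans_le (le_lipschitzMinorant hG (fun y hy => (hball hy).le) ?_)
  rw [← div_le_iff₀ hr]
  exact Real.toNNReal_le_iff_le_coe.1 hK

end LipschitzMinorant

theorem exists_seq_hasCompactSupport_eventually_eq_one (X : Type*) [TopologicalSpace X]
    [RegularSpace X] [LocallyCompactSpace X] [SigmaCompactSpace X] :
    ∃ φ : ℕ → C(X, ℝ), (∀ n, HasCompactSupport (φ n)) ∧ (∀ n x, φ n x ∈ Icc 0 1) ∧
      ∀ x, ∀ᶠ n in atTop, φ n x = 1 := by
  choose φ hφ1 _ hφc hφ01 using fun n => exists_continuous_one_zero_of_isCompact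
    (isCompact_compactCovering X n) isClosed_empty (disjoint_empty _)
  refine ⟨φ, hφc, hφ01, fun x => ?_⟩
  obtain ⟨m, hm⟩ := exists_mem_compactCovering x
  filter_upwards [eventually_ge_atTop m] with n hn
  exact hφ1 n (compactCovering_subset X hn hm)

section Integrals

variable {X : Type*} [MeasurableSpace X] {μ : Measure X}

/-- The `max _ 0` covers the case where `G` is not integrable, so that the left side is `0`
by convention. -/
theorem integral_one_sub_mul_le_max {φ G ψ : X → ℝ} (hφG : Integrable (fun x => φ x * G x) μ)
    (hψ : Integrable ψ μ) (hψφG : ∀ x, ψ x ≤ φ x * G x) :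
    ∫ x, (1 - φ x) * G x ∂μ ≤ max (∫ x, G x ∂μ - ∫ x, ψ x ∂μ) 0 := by
  have hsplit : (fun x => (1 - φ x) * G x) = fun x => G x - φ x * G x := by
    funext x; ring
  by_cases hG : Integrable G μ
  · rw [hsplit, integral_sub hG hφG]
    exact le_max_of_le_left (by linarith [integral_mono hψ hφG hψφG])
  · have : ¬ Integrable (fun x => (1 - φ x) * G x) μ := fun h =>
      hG ((h.add hφG).congr (ae_of_all _ fun x => by simp only [Pi.add_apply]; ring))
    rw [integral_undef this]
    exact le_max_right _ _

theorem integrable_mul_of_abs_le_on_tsupport [TopologicalSpace X] [OpensMeasurableSpace X]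
    [IsFiniteMeasure μ] {φ G : X → ℝ} (hφ : Continuous φ) (hφc : HasCompactSupport φ)
    (hG : Measurable G) {C : ℝ} (hGC : ∀ x ∈ tsupport φ, |G x| ≤ C) :
    Integrable (fun x => φ x * G x) μ := by
  obtain ⟨D, hD⟩ := hφ.bounded_above_of_compact_support hφc
  refine .of_bound (hφ.measurable.mul hG).aestronglyMeasurable (D * max C 0)
    (Eventually.of_forall fun x => ?_)
  have hD0 : 0 ≤ D := (norm_nonneg _).trans (hD x)
  by_cases hx : x ∈ tsupport φ
  · rw [norm_mul]
    exact mul_le_mul (hD x) ((hGC x hx).trans (le_max_left _ _)) (norm_nonneg _) hD0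
  · simp [image_eq_zero_of_notMem_tsupport hx, mul_nonneg hD0 (le_max_right C 0)]

end Integrals

theorem exists_hasCompactSupport_minorant_integral_gt {X : Type*} [MetricSpace X]
    [LocallyCompactSpace X] [SigmaCompactSpace X] [MeasurableSpace X] [OpensMeasurableSpace X]
    {μ : Measure X} {G : X → ℝ} (hG0 : ∀ x, 0 ≤ G x) (hGint : Integrable G μ)
    (hGc : ∀ᵐ x ∂μ, ContinuousAt G x) {ε : ℝ} (hε : 0 < ε) :
    ∃ φ : C(X, ℝ), HasCompactSupport φ ∧ (∀ x, φ x ∈ Icc 0 1) ∧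
      ∃ ψ : X → ℝ, Continuous ψ ∧ HasCompactSupport ψ ∧ (∀ x, ψ x ≤ φ x * G x) ∧
        ∫ x, G x ∂μ - ε < ∫ x, ψ x ∂μ := by
  obtain ⟨φ, hφc, hφ01, hφ1⟩ := exists_seq_hasCompactSupport_eventually_eq_one X
  let ψ (n : ℕ) (x : X) : ℝ := φ n x * lipschitzMinorant G n x
  have hψc (n : ℕ) : Continuous (ψ n) :=
    (φ n).continuous.mul (lipschitzWith_lipschitzMinorant hG0 n).continuous
  have hψ_le (n : ℕ) (x : X) : ψ n x ≤ φ n x * G x :=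
    mul_le_mul_of_nonneg_left (lipschitzMinorant_le hG0 n x) (hφ01 n x).1
  have hψ_tendsto : Tendsto (fun n => ∫ x, ψ n x ∂μ) atTop (𝓝 (∫ x, G x ∂μ)) := by
    refine tendsto_integral_of_dominated_convergence G (fun n => (hψc n).aestronglyMeasurable)
      hGint (fun n => ae_of_all _ fun x => ?_) (hGc.mono fun x hx => ?_)
    · rw [norm_mul, Real.norm_of_nonneg (hφ01 n x).1,
        Real.norm_of_nonneg (lipschitzMinorant_nonneg hG0 n x)]
      exact (mul_le_of_le_one_left (lipschitzMinorant_nonneg hG0 n x) (hφ01 n x).2).trans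
        (lipschitzMinorant_le hG0 n x)
    · simpa using (tendsto_nhds_of_eventually_eq (hφ1 x)).mul
        ((tendsto_lipschitzMinorant hG0 hx).comp tendsto_natCast_atTop_atTop)
  obtain ⟨n, hn⟩ := (hψ_tendsto.eventually (lt_mem_nhds (sub_lt_self _ hε))).exists
  exact ⟨φ n, hφc n, hφ01 n, ψ n, hψc n, (hφc n).mul_right, hψ_le n, hn⟩

theorem uniform_tightness_of_integrals_general (X : Type*) [MetricSpace X] [LocallyCompactSpace X]
    [SecondCountableTopology X] [MeasurableSpace X] [BorelSpace X]
    (μ : Measure X) (μs : ℕ → Measure X)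
    (hμs : ∀ i, IsProbabilityMeasure (μs i))
    (hweak : ∀ f : X → ℝ, Continuous f → (∃ C : ℝ, ∀ x, |f x| ≤ C) →
      Tendsto (fun i => ∫ x, f x ∂(μs i)) atTop (𝓝 (∫ x, f x ∂μ)))
    (G : X → ℝ) (hGm : Measurable G) (hG0 : ∀ x, 0 ≤ G x)
    (hGb : ∀ K : Set X, IsCompact K → ∃ C : ℝ, ∀ x ∈ K, G x ≤ C)
    (hGd : μ {x | ¬ ContinuousAt G x} = 0)
    (hGint : Integrable G μ)
    (hGconv : Tendsto (fun i => ∫ x, G x ∂(μs i)) atTop (𝓝 (∫ x, G x ∂μ)))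
    (ε : ℝ) (hε : 0 < ε) :
    ∃ (i₀ : ℕ) (φ : X → ℝ), Continuous φ ∧ HasCompactSupport φ ∧
      (∀ x, 0 ≤ φ x ∧ φ x ≤ 1) ∧
      ∀ i, i₀ ≤ i → ∫ x, (1 - φ x) * G x ∂(μs i) < ε := by
  obtain ⟨φ, hφc, hφ01, ψ, hψc, hψcs, hψ_le, hψ_int⟩ :=
    exists_hasCompactSupport_minorant_integral_gt hG0 hGint (ae_iff.2 hGd) hε
  have hdiff : Tendsto (fun i => ∫ x, G x ∂(μs i) - ∫ x, ψ x ∂(μs i)) atTop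
      (𝓝 (∫ x, G x ∂μ - ∫ x, ψ x ∂μ)) :=
    hGconv.sub (hweak ψ hψc (hψc.bounded_above_of_compact_support hψcs))
  obtain ⟨i₀, hi₀⟩ := eventually_atTop.1 (hdiff.eventually_lt_const (show _ < ε by linarith))
  obtain ⟨C, hC⟩ := hGb _ hφc
  refine ⟨i₀, φ, φ.continuous, hφc, hφ01, fun i hi => ?_⟩
  have hφG : Integrable (fun x => φ x * G x) (μs i) :=
    integrable_mul_of_abs_le_on_tsupport φ.continuous hφc hGm
      (fun x hx => (abs_of_nonneg (hG0 x)).trans_le (hC x hx))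
  calc ∫ x, (1 - φ x) * G x ∂(μs i)
      ≤ max (∫ x, G x ∂(μs i) - ∫ x, ψ x ∂(μs i)) 0 :=
        integral_one_sub_mul_le_max hφG (hψc.integrable_of_hasCompactSupport hψcs) hψ_le
    _ < ε := max_lt (hi₀ i hi) hε

/-- **Corollary 6.3**: uniform smallness of `∫ (1-φ)·G dμ_i` outside a compact set. -/
theorem uniform_tightness_of_integrals (X : Type*) [MetricSpace X] [LocallyCompactSpace X]
    [SecondCountableTopology X] [MeasurableSpace X] [BorelSpace X]
    (μ : Measure X) (μs : ℕ → Measure X)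
    (hμ : IsProbabilityMeasure μ) (hμs : ∀ i, IsProbabilityMeasure (μs i))
    (hweak : ∀ f : X → ℝ, Continuous f → (∃ C : ℝ, ∀ x, |f x| ≤ C) →
      Tendsto (fun i => ∫ x, f x ∂(μs i)) atTop (𝓝 (∫ x, f x ∂μ)))
    (G : X → ℝ) (hGm : Measurable G) (hG0 : ∀ x, 0 ≤ G x)
    (hGb : ∀ K : Set X, IsCompact K → ∃ C : ℝ, ∀ x ∈ K, G x ≤ C)
    (hGd : μ {x | ¬ ContinuousAt G x} = 0)
    (hGint : Integrable G μ)
    (hGconv : Tendsto (fun i => ∫ x, G x ∂(μs i)) atTop (𝓝 (∫ x, G x ∂μ)))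
    (ε : ℝ) (hε : 0 < ε) :
    ∃ (i₀ : ℕ) (φ : X → ℝ), Continuous φ ∧ HasCompactSupport φ ∧
      (∀ x, 0 ≤ φ x ∧ φ x ≤ 1) ∧
      ∀ i, i₀ ≤ i → ∫ x, (1 - φ x) * G x ∂(μs i) < ε :=
  uniform_tightness_of_integrals_general X μ μs hμs hweak G hGm hG0 hGb hGd hGint hGconv ε hε
end
end

section
/- For every c > 0 and every ε ∈ (0,1) there exists δ > 0 such that for all y ∈ ℝ^n with ‖y‖ ≤ δ, all s ∈ [0, 1/2], and every x ∈ 𝓛 of the form x = g_s x' with x' ∈ 𝓛 satisfying (x'_{n+2})² − (x'_{n+1})² < c² and x'_{n+1} + x'_{n+2} ≥ 1, one has (1 − ε)(x_{n+1} + x_{n+2}) < (u_y x)_{n+1} + (u_y x)_{n+2} < (1 + ε)(x_{n+1} + x_{n+2}); moreover (u_y x)_{n+2} − (u_y x)_{n+1} = x_{n+2} − x_{n+1} for every x ∈ ℝ^{n+2}. -/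
noncomputable section

open MeasureTheory Metric Filter Topology
open scoped ENNReal

/-- The unipotent map `u_y`. -/
def umap (n : ℕ) (y : EuclideanSpace ℝ (Fin n)) (x : EuclideanSpace ℝ (Fin (n + 2))) :
    EuclideanSpace ℝ (Fin (n + 2)) :=
  WithLp.toLp 2 fun i =>
    if h : (i : ℕ) < n then
      x i - x (sndC n) * y ⟨i, h⟩ + x (lastC n) * y ⟨i, h⟩
    else if i = sndC n then
      (∑ j : Fin n, y j * x (Fin.castLE (by omega) j)) +
        (1 - ‖y‖ ^ 2 / 2) * x (sndC n) + (‖y‖ ^ 2 / 2) * x (lastC n)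
    else
      (∑ j : Fin n, y j * x (Fin.castLE (by omega) j)) -
        (‖y‖ ^ 2 / 2) * x (sndC n) + (1 + ‖y‖ ^ 2 / 2) * x (lastC n)

/-
Write `σ = x_{n+1} + x_{n+2}`, `d = x_{n+2} − x_{n+1}` and `h` for the first `n` coordinates.
Then `u_y` fixes `d` and shifts `σ` by `2⟨y, h⟩ + ‖y‖² d`, while `g_s` fixes `h` and multiplies
`σ` by `e^{-s}` and `d` by `e^{s}`. On the light cone `‖h‖² = σ d`, and `σ d` is `g_s`-invariant,
so `‖h‖ < c` and `σ d < c²` persist along the flow; since moreover `σ ≥ e^{-1/2} ≥ 1/2`, the shift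
is at most `2‖y‖c + 2‖y‖²c²`, which is below `ε σ` once `‖y‖ c ≤ ε/8`.
-/

def headPart (n : ℕ) (x : EuclideanSpace ℝ (Fin (n + 2))) : EuclideanSpace ℝ (Fin n) :=
  WithLp.toLp 2 fun j => x (Fin.castLE (Nat.le_add_right n 2) j)

lemma sndC_ne_lastC (n : ℕ) : sndC n ≠ lastC n := by
  simp [sndC, lastC, Fin.ext_iff]

section Coordinates

variable {n : ℕ}

lemma castLE_ne_sndC (j : Fin n) : Fin.castLE (Nat.le_add_right n 2) j ≠ sndC n := by
  simp [sndC, Fin.ext_iff, j.isLt.ne]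

lemma castLE_ne_lastC (j : Fin n) : Fin.castLE (Nat.le_add_right n 2) j ≠ lastC n := by
  simp [lastC, Fin.ext_iff]; omega

lemma gmap_sndC (t : ℝ) (x : EuclideanSpace ℝ (Fin (n + 2))) :
    gmap n t x (sndC n) = Real.cosh t * x (sndC n) - Real.sinh t * x (lastC n) := by
  simp [gmap]

lemma gmap_lastC (t : ℝ) (x : EuclideanSpace ℝ (Fin (n + 2))) :
    gmap n t x (lastC n) = -Real.sinh t * x (sndC n) + Real.cosh t * x (lastC n) := by
  simp [gmap, (sndC_ne_lastC n).symm]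

lemma headPart_gmap (t : ℝ) (x : EuclideanSpace ℝ (Fin (n + 2))) :
    headPart n (gmap n t x) = headPart n x := by
  ext j
  simp [headPart, gmap, castLE_ne_sndC, castLE_ne_lastC]

lemma gmap_sndC_add_lastC (t : ℝ) (x : EuclideanSpace ℝ (Fin (n + 2))) :
    gmap n t x (sndC n) + gmap n t x (lastC n) = Real.exp (-t) * (x (sndC n) + x (lastC n)) := by
  rw [gmap_sndC, gmap_lastC, ← Real.cosh_sub_sinh]; ring

lemma gmap_lastC_sub_sndC (t : ℝ) (x : EuclideanSpace ℝ (Fin (n + 2))) :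
    gmap n t x (lastC n) - gmap n t x (sndC n) = Real.exp t * (x (lastC n) - x (sndC n)) := by
  rw [gmap_sndC, gmap_lastC, ← Real.cosh_add_sinh]; ring

lemma gmap_sndC_add_lastC_mul_lastC_sub_sndC (t : ℝ) (x : EuclideanSpace ℝ (Fin (n + 2))) :
    (gmap n t x (sndC n) + gmap n t x (lastC n)) * (gmap n t x (lastC n) - gmap n t x (sndC n)) =
      (x (sndC n) + x (lastC n)) * (x (lastC n) - x (sndC n)) := by
  rw [gmap_sndC_add_lastC, gmap_lastC_sub_sndC, Real.exp_neg]
  field_simp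

lemma inner_headPart (y : EuclideanSpace ℝ (Fin n)) (x : EuclideanSpace ℝ (Fin (n + 2))) :
    inner ℝ y (headPart n x) = ∑ j : Fin n, y j * x (Fin.castLE (Nat.le_add_right n 2) j) := by
  simp [headPart, PiLp.inner_apply, mul_comm]

lemma umap_sndC (y : EuclideanSpace ℝ (Fin n)) (x : EuclideanSpace ℝ (Fin (n + 2))) :
    umap n y x (sndC n) = inner ℝ y (headPart n x) +
      (1 - ‖y‖ ^ 2 / 2) * x (sndC n) + ‖y‖ ^ 2 / 2 * x (lastC n) := by
  simp [umap, inner_headPart, sndC]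

lemma umap_lastC (y : EuclideanSpace ℝ (Fin n)) (x : EuclideanSpace ℝ (Fin (n + 2))) :
    umap n y x (lastC n) = inner ℝ y (headPart n x) -
      ‖y‖ ^ 2 / 2 * x (sndC n) + (1 + ‖y‖ ^ 2 / 2) * x (lastC n) := by
  have : ¬ ((lastC n : ℕ) < n) := by simp [lastC]
  simp [umap, inner_headPart, this, (sndC_ne_lastC n).symm]

lemma umap_lastC_sub_sndC (y : EuclideanSpace ℝ (Fin n)) (x : EuclideanSpace ℝ (Fin (n + 2))) :
    umap n y x (lastC n) - umap n y x (sndC n) = x (lastC n) - x (sndC n) := by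
  rw [umap_sndC, umap_lastC]; ring

lemma umap_sndC_add_lastC (y : EuclideanSpace ℝ (Fin n)) (x : EuclideanSpace ℝ (Fin (n + 2))) :
    umap n y x (sndC n) + umap n y x (lastC n) = x (sndC n) + x (lastC n) +
      (2 * inner ℝ y (headPart n x) + ‖y‖ ^ 2 * (x (lastC n) - x (sndC n))) := by
  rw [umap_sndC, umap_lastC]; ring

lemma Qf_eq_norm_headPart_sq (x : EuclideanSpace ℝ (Fin (n + 2))) :
    Qf n x = ‖headPart n x‖ ^ 2 + x (sndC n) ^ 2 - x (lastC n) ^ 2 := by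
  rw [Qf, Fin.sum_univ_castSucc, EuclideanSpace.real_norm_sq_eq]
  rfl

lemma norm_headPart_sq_of_mem_lightCone {x : EuclideanSpace ℝ (Fin (n + 2))}
    (hx : x ∈ lightCone n) :
    ‖headPart n x‖ ^ 2 = (x (sndC n) + x (lastC n)) * (x (lastC n) - x (sndC n)) := by
  have h := hx.1
  rw [Qf_eq_norm_headPart_sq] at h
  linear_combination h

end Coordinates

lemma abs_umap_sndC_add_lastC_sub_lt {n : ℕ} {c ε : ℝ} (hε : 0 < ε) (hε1 : ε < 1)
    {y : EuclideanSpace ℝ (Fin n)} {x : EuclideanSpace ℝ (Fin (n + 2))} (hyc : ‖y‖ * c ≤ ε / 8)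
    (hx : ‖headPart n x‖ ^ 2 = (x (sndC n) + x (lastC n)) * (x (lastC n) - x (sndC n)))
    (hxc : ‖headPart n x‖ ≤ c) (hσ : 1 / 2 ≤ x (sndC n) + x (lastC n)) :
    |umap n y x (sndC n) + umap n y x (lastC n) - (x (sndC n) + x (lastC n))| <
      ε * (x (sndC n) + x (lastC n)) := by
  set σ := x (sndC n) + x (lastC n)
  set d := x (lastC n) - x (sndC n)
  rw [umap_sndC_add_lastC, add_sub_cancel_left]
  have hinner : |inner ℝ y (headPart n x)| ≤ ‖y‖ * c :=
    (abs_real_inner_le_norm _ _).trans (mul_le_mul_of_nonneg_left hxc (norm_nonneg y))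
  have hσd : σ * d ≤ c ^ 2 := hx ▸ pow_le_pow_left₀ (norm_nonneg _) hxc 2
  have hd : 0 ≤ d := by nlinarith [sq_nonneg ‖headPart n x‖]
  have hyd : ‖y‖ ^ 2 * d ≤ 2 * (‖y‖ * c) ^ 2 := by nlinarith [sq_nonneg ‖y‖]
  have hyc0 : 0 ≤ ‖y‖ * c := (abs_nonneg _).trans hinner
  calc |2 * inner ℝ y (headPart n x) + ‖y‖ ^ 2 * d|
      ≤ 2 * |inner ℝ y (headPart n x)| + ‖y‖ ^ 2 * d := by
        grw [abs_add_le, abs_mul, abs_two, abs_of_nonneg (by positivity : 0 ≤ ‖y‖ ^ 2 * d)]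
    _ ≤ 2 * (‖y‖ * c) + 2 * (‖y‖ * c) ^ 2 := by gcongr
    _ < ε / 2 := by nlinarith
    _ ≤ ε * σ := by nlinarith

lemma one_half_le_gmap_sndC_add_lastC {n : ℕ} {s : ℝ} (hs : s ≤ 1 / 2)
    {x : EuclideanSpace ℝ (Fin (n + 2))} (hx : 1 ≤ x (sndC n) + x (lastC n)) :
    1 / 2 ≤ gmap n s x (sndC n) + gmap n s x (lastC n) := by
  rw [gmap_sndC_add_lastC]
  nlinarith [Real.add_one_le_exp (-s), Real.exp_pos (-s)]

theorem umap_light_cone_estimates_general (n : ℕ) :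
    (∀ c : ℝ, 0 < c → ∀ ε : ℝ, 0 < ε → ε < 1 →
      ∃ δ : ℝ, 0 < δ ∧
        ∀ y : EuclideanSpace ℝ (Fin n), ‖y‖ ≤ δ →
          ∀ s ∈ Set.Icc (0 : ℝ) (1 / 2),
            ∀ x' ∈ lightCone n,
              x' (lastC n) ^ 2 - x' (sndC n) ^ 2 < c ^ 2 →
              1 ≤ x' (sndC n) + x' (lastC n) →
              (1 - ε) * (gmap n s x' (sndC n) + gmap n s x' (lastC n)) <
                  umap n y (gmap n s x') (sndC n) + umap n y (gmap n s x') (lastC n) ∧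
                umap n y (gmap n s x') (sndC n) + umap n y (gmap n s x') (lastC n) <
                  (1 + ε) * (gmap n s x' (sndC n) + gmap n s x' (lastC n))) ∧
    (∀ y : EuclideanSpace ℝ (Fin n), ∀ x : EuclideanSpace ℝ (Fin (n + 2)),
      umap n y x (lastC n) - umap n y x (sndC n) = x (lastC n) - x (sndC n)) := by
  refine ⟨fun c hc ε hε hε1 => ⟨ε / (8 * c), by positivity, ?_⟩, umap_lastC_sub_sndC⟩
  intro y hy s hs x' hx' hQc h1
  have hyc : ‖y‖ * c ≤ ε / 8 := by
    calc ‖y‖ * c ≤ ε / (8 * c) * c := by gcongr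
      _ = ε / 8 := by field_simp
  have hhead := norm_headPart_sq_of_mem_lightCone hx'
  have hx : ‖headPart n (gmap n s x')‖ ^ 2 = (gmap n s x' (sndC n) + gmap n s x' (lastC n)) *
      (gmap n s x' (lastC n) - gmap n s x' (sndC n)) := by
    rw [headPart_gmap, hhead, gmap_sndC_add_lastC_mul_lastC_sub_sndC]
  have hxc : ‖headPart n (gmap n s x')‖ ≤ c := by
    rw [headPart_gmap]
    exact (lt_of_pow_lt_pow_left₀ 2 hc.le (by rw [hhead]; linarith)).le
  obtain ⟨hlo, hhi⟩ := abs_lt.1 (abs_umap_sndC_add_lastC_sub_lt hε hε1 hyc hx hxc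
    (one_half_le_gmap_sndC_add_lastC hs.2 h1))
  constructor <;> linarith

/-- **Equation (5.2)** and the accompanying identity: estimates for the effect of the
unipotent map `u_y` on the quantity `x_{n+1} + x_{n+2}` along `g_s F_c`. -/
theorem umap_light_cone_estimates (n : ℕ) (hn : 1 ≤ n) :
    (∀ c : ℝ, 0 < c → ∀ ε : ℝ, 0 < ε → ε < 1 →
      ∃ δ : ℝ, 0 < δ ∧
        ∀ y : EuclideanSpace ℝ (Fin n), ‖y‖ ≤ δ →
          ∀ s ∈ Set.Icc (0 : ℝ) (1 / 2),
            ∀ x' ∈ lightCone n,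
              x' (lastC n) ^ 2 - x' (sndC n) ^ 2 < c ^ 2 →
              1 ≤ x' (sndC n) + x' (lastC n) →
              (1 - ε) * (gmap n s x' (sndC n) + gmap n s x' (lastC n)) <
                  umap n y (gmap n s x') (sndC n) + umap n y (gmap n s x') (lastC n) ∧
                umap n y (gmap n s x') (sndC n) + umap n y (gmap n s x') (lastC n) <
                  (1 + ε) * (gmap n s x' (sndC n) + gmap n s x' (lastC n))) ∧
    (∀ y : EuclideanSpace ℝ (Fin n), ∀ x : EuclideanSpace ℝ (Fin (n + 2)),
      umap n y x (lastC n) - umap n y x (sndC n) = x (lastC n) - x (sndC n)) :=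
  umap_light_cone_estimates_general n
end
end

section
/- Let f : ℝ^{n+2} → ℝ be bounded with compact support, and define f̂(g) = Σ_{v ∈ Λ₀} f(gv) for g ∈ GL_{n+2}(ℝ) (the sum over the countable set Λ₀). If g₀ ∈ GL_{n+2}(ℝ) is such that f is continuous at g₀v for every v ∈ Λ₀, then f̂ is continuous at g₀; in particular, there is a neighborhood of g₀ on which only finitely many v ∈ Λ₀ contribute a nonzero term. -/
noncomputable section

open MeasureTheory Metric Filter Topology
open scoped ENNReal

/-- The action of a matrix on `ℝ^{n+2}`. -/
def matAct (n : ℕ) (g : Matrix (Fin (n + 2)) (Fin (n + 2)) ℝ)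
    (x : EuclideanSpace ℝ (Fin (n + 2))) : EuclideanSpace ℝ (Fin (n + 2)) :=
  WithLp.toLp 2 (g.mulVec x)

/-- The group `G = SO(n+1,1)°`: matrices preserving `Q`, of determinant one, with
positive lower-right entry. -/
def Ggrp (n : ℕ) : Set (Matrix (Fin (n + 2)) (Fin (n + 2)) ℝ) :=
  {g | (∀ x : EuclideanSpace ℝ (Fin (n + 2)), Qf n (matAct n g x) = Qf n x) ∧
    g.det = 1 ∧ 0 < g (lastC n) (lastC n)}

/-! Near an invertible `g₀` every `g` is uniformly bounded below, `‖x‖ ≤ C ‖g x‖`, so the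
`v ∈ Λ₀` with `g v` in the support of `f` all lie in one fixed ball, which contains only finitely
many integer points. Near `g₀` the transform is therefore a fixed finite sum of functions
continuous at `g₀`. -/

open Matrix

theorem EuclideanSpace.finite_of_isBounded_of_forall_int {ι : Type*} [Fintype ι]
    {s : Set (EuclideanSpace ℝ ι)} (hs : Bornology.IsBounded s)
    (hint : ∀ x ∈ s, ∀ i, ∃ m : ℤ, x i = m) : s.Finite := by
  let b := (EuclideanSpace.basisFun ι ℝ).toBasis
  refine (ZSpan.setFinite_inter b hs).subset fun x hx => ⟨hx, ?_⟩
  rw [SetLike.mem_coe, b.mem_span_iff_repr_mem ℤ]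
  intro i
  obtain ⟨m, hm⟩ := hint x hx i
  exact ⟨m, by simp [b, hm]⟩

theorem ContinuousLinearMap.norm_le_of_leftInverse_of_norm_sub_le {𝕜 E F : Type*}
    [NontriviallyNormedField 𝕜] [SeminormedAddCommGroup E] [NormedSpace 𝕜 E]
    [SeminormedAddCommGroup F] [NormedSpace 𝕜 F] {A g : E →L[𝕜] F} {H : F →L[𝕜] E}
    (hHA : ∀ x, H (A x) = x) (hg : ‖H‖ * ‖g - A‖ ≤ 1 / 2) (x : E) :
    ‖x‖ ≤ 2 * ‖H‖ * ‖g x‖ := by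
  have hAx : ‖A x‖ ≤ ‖g x‖ + ‖g - A‖ * ‖x‖ := calc
    ‖A x‖ = ‖g x - (g - A) x‖ := by simp
    _ ≤ ‖g x‖ + ‖(g - A) x‖ := norm_sub_le _ _
    _ ≤ ‖g x‖ + ‖g - A‖ * ‖x‖ := by gcongr; exact (g - A).le_opNorm x
  have : ‖x‖ ≤ ‖H‖ * ‖g x‖ + ‖H‖ * ‖g - A‖ * ‖x‖ := calc
    ‖x‖ = ‖H (A x)‖ := by rw [hHA]
    _ ≤ ‖H‖ * ‖A x‖ := H.le_opNorm _
    _ ≤ ‖H‖ * (‖g x‖ + ‖g - A‖ * ‖x‖) := by gcongr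
    _ = _ := by ring
  linarith [mul_le_mul_of_nonneg_right hg (norm_nonneg x)]

theorem ContinuousLinearMap.eventually_norm_le_mul_norm_apply {𝕜 E F : Type*}
    [NontriviallyNormedField 𝕜] [SeminormedAddCommGroup E] [NormedSpace 𝕜 E]
    [SeminormedAddCommGroup F] [NormedSpace 𝕜 F] {A : E →L[𝕜] F} {H : F →L[𝕜] E}
    (hHA : ∀ x, H (A x) = x) :
    ∀ᶠ g in 𝓝 A, ∀ x, ‖x‖ ≤ 2 * ‖H‖ * ‖g x‖ := by
  have hε : 0 < 1 / (2 * (‖H‖ + 1)) := by positivity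
  filter_upwards [closedBall_mem_nhds A hε] with g hg x
  refine norm_le_of_leftInverse_of_norm_sub_le hHA ?_ x
  rw [mem_closedBall, dist_eq_norm] at hg
  calc ‖H‖ * ‖g - A‖ ≤ (‖H‖ + 1) * (1 / (2 * (‖H‖ + 1))) := by gcongr; linarith
    _ = 1 / 2 := by field_simp

theorem Matrix.eventually_norm_le_mul_norm_mulVec {ι : Type*} [Fintype ι] [DecidableEq ι]
    {g₀ : Matrix ι ι ℝ} (hg₀ : IsUnit g₀) :
    ∃ C : ℝ, 0 ≤ C ∧ ∀ᶠ g in 𝓝 g₀, ∀ x : EuclideanSpace ℝ ι,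
      ‖x‖ ≤ C * ‖(WithLp.toLp 2 (g *ᵥ x) : EuclideanSpace ℝ ι)‖ := by
  obtain ⟨u, rfl⟩ := hg₀
  let T := Matrix.toEuclideanCLM (n := ι) (𝕜 := ℝ)
  have hT : Continuous T :=
    LinearMap.continuous_of_finiteDimensional T.toAlgEquiv.toLinearMap
  refine ⟨2 * ‖T ↑u⁻¹‖, by positivity, hT.continuousAt.eventually
    (ContinuousLinearMap.eventually_norm_le_mul_norm_apply fun x => ?_)⟩
  change (T ↑u⁻¹ * T ↑u) x = x
  rw [← map_mul, Units.inv_mul, map_one]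
  rfl

theorem continuousAt_tsum_of_finite {X ι M : Type*} [TopologicalSpace X] [AddCommMonoid M]
    [TopologicalSpace M] [ContinuousAdd M] {F : ι → X → M} {x₀ : X} {U : Set X}
    (hU : U ∈ 𝓝 x₀) (hfin : {i | ∃ x ∈ U, F i x ≠ 0}.Finite)
    (hF : ∀ i, ContinuousAt (F i) x₀) :
    ContinuousAt (fun x => ∑' i, F i x) x₀ := by
  have hsum : ContinuousAt (fun x => ∑ i ∈ hfin.toFinset, F i x) x₀ :=
    tendsto_finsetSum _ fun i _ => hF i
  refine hsum.congr ?_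
  filter_upwards [hU] with x hx
  exact (tsum_eq_sum fun i hi => by_contra fun hne => hi (hfin.mem_toFinset.2 ⟨x, hx, hne⟩)).symm

theorem siegel_transform_continuousAt_general (n : ℕ)
    (f : EuclideanSpace ℝ (Fin (n + 2)) → ℝ)
    (hs : HasCompactSupport f)
    (g₀ : Matrix (Fin (n + 2)) (Fin (n + 2)) ℝ) (hg₀ : IsUnit g₀)
    (hcont : ∀ v ∈ Lat0 n, ContinuousAt f (matAct n g₀ v)) :
    ContinuousAt
      (fun g : Matrix (Fin (n + 2)) (Fin (n + 2)) ℝ =>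
        ∑' v : ↑(Lat0 n), f (matAct n g v.1)) g₀ ∧
    ∃ U : Set (Matrix (Fin (n + 2)) (Fin (n + 2)) ℝ), g₀ ∈ U ∧ IsOpen U ∧
      {v : ↑(Lat0 n) | ∃ g ∈ U, f (matAct n g v.1) ≠ 0}.Finite := by
  obtain ⟨C, hC0, hC⟩ := Matrix.eventually_norm_le_mul_norm_mulVec hg₀
  obtain ⟨U, hCU, hU, hg₀U⟩ := eventually_nhds_iff.1 hC
  obtain ⟨R, hR⟩ := hs.isCompact.isBounded.subset_closedBall 0
  have hfin : {v : ↑(Lat0 n) | ∃ g ∈ U, f (matAct n g v.1) ≠ 0}.Finite := by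
    refine Set.Finite.of_finite_image ?_ Subtype.val_injective.injOn
    refine EuclideanSpace.finite_of_isBounded_of_forall_int
      ((isBounded_closedBall (x := 0) (r := C * R)).subset ?_) ?_
    · rintro _ ⟨v, ⟨g, hg, hfv⟩, rfl⟩
      have hgv : ‖matAct n g v.1‖ ≤ R := mem_closedBall_zero_iff.1 (hR (subset_tsupport f hfv))
      exact mem_closedBall_zero_iff.2 ((hCU g hg v.1).trans (by gcongr; exact hgv))
    · rintro _ ⟨v, -, rfl⟩
      exact v.2.2.1
  refine ⟨continuousAt_tsum_of_finite (hU.mem_nhds hg₀U) hfin fun v => ?_, U, hg₀U, hU, hfin⟩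
  exact (hcont v.1 v.2).comp (f := fun g => matAct n g v.1)
    (Continuous.continuousAt <| by unfold matAct; fun_prop)

/-- **Lemma 6.1**: the Siegel transform of a bounded compactly supported function `f` is
continuous at every `g₀ ∈ GL_{n+2}(ℝ)` such that `f` is continuous at each point `g₀v`,
`v ∈ Λ₀`; moreover on some neighborhood of `g₀` only finitely many `v ∈ Λ₀` contribute. -/
theorem siegel_transform_continuousAt (n : ℕ) (hn : 1 ≤ n)
    (f : EuclideanSpace ℝ (Fin (n + 2)) → ℝ)
    (hb : ∃ C : ℝ, ∀ x, |f x| ≤ C) (hs : HasCompactSupport f)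
    (g₀ : Matrix (Fin (n + 2)) (Fin (n + 2)) ℝ) (hg₀ : IsUnit g₀)
    (hcont : ∀ v ∈ Lat0 n, ContinuousAt f (matAct n g₀ v)) :
    ContinuousAt
      (fun g : Matrix (Fin (n + 2)) (Fin (n + 2)) ℝ =>
        ∑' v : ↑(Lat0 n), f (matAct n g v.1)) g₀ ∧
    ∃ U : Set (Matrix (Fin (n + 2)) (Fin (n + 2)) ℝ), g₀ ∈ U ∧ IsOpen U ∧
      {v : ↑(Lat0 n) | ∃ g ∈ U, f (matAct n g v.1) ≠ 0}.Finite :=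
  siegel_transform_continuousAt_general n f hs g₀ hg₀ hcont
end
end
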